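/- Let G be a finite normal form game with strict preferences. For every Pareto optimal outcome a ∈ A there exists an initial reference point a₀ ∈ A such that for every positive integer k and every admissible player function I, the no-harm equilibrium outcome of Γ(a₀,k,I) is a. -/

import Mathlib

namespace NoHarm

/-- A finite normal form game with `n` players: finite action sets `A i`,
nonempty, with decidable equality, and utility functions `u i : Profile → ℝ`. -/
structure Game (n : ℕ) where
  A : Fin n → Type
  fintypeA : ∀ i, Fintype (A i)
  decA : ∀ i, DecidableEq (A i)
  neA : ∀ i, Nonempty (A i)
  u : Fin n → (∀ i, A i) → ℝ

attribute [instance] Game.fintypeA Game.decA Game.neA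

/-- Action profiles of `G`. -/
abbrev Profile {n : ℕ} (G : Game n) : Type := ∀ i, G.A i

/-- A recorded move in the extensive form game `Γ`: the acting player together
with their choice (`none` = pass, `some a` = choose action `a`; choosing the
current component of the state is "staying", any other action is "moving"). -/
abbrev Move {n : ℕ} (G : Game n) : Type := Σ i : Fin n, Option (G.A i)

/-- A node of `Γ`, identified with the history of moves leading to it
(the root is `[]`). -/
abbrev Hist {n : ℕ} (G : Game n) : Type := List (Move G)

variable {n : ℕ}

/-- One step of the left fold computing, along a history, the triple
(current state, current reference point, player who established the current
reference point by staying -- `none` for the initial reference point). -/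
def stepFold (G : Game n) (x : Profile G × Profile G × Option (Fin n)) (m : Move G) :
    Profile G × Profile G × Option (Fin n) :=
  match m with
  | ⟨_, none⟩ => x
  | ⟨i, some a⟩ =>
    if a = x.1 i then (x.1, x.1, some i)
    else (Function.update x.1 i a, x.2.1, x.2.2)

/-- The (state, reference point, proposer) data at the node `h` of `Γ(a0,·,·)`. -/
def fold3 (G : Game n) (a0 : Profile G) (h : Hist G) :
    Profile G × Profile G × Option (Fin n) :=
  h.foldl (stepFold G) (a0, a0, none)

/-- The state `S(x)` at a node. -/
def state (G : Game n) (a0 : Profile G) (h : Hist G) : Profile G := (fold3 G a0 h).1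

/-- The reference point at a node (the most recent state at which a player
stayed, initially `a0`). -/
def refpt (G : Game n) (a0 : Profile G) (h : Hist G) : Profile G := (fold3 G a0 h).2.1

/-- The player who established the current reference point by staying
(`none` if it is still the initial reference point `a0`). -/
def proposer (G : Game n) (a0 : Profile G) (h : Hist G) : Option (Fin n) :=
  (fold3 G a0 h).2.2

/-- `m` is a stay action at the node `h`: the mover chooses exactly the
component of the current state belonging to them. -/
def IsStay (G : Game n) (a0 : Profile G) (h : Hist G) (m : Move G) : Prop :=
  m.2 = some (state G a0 h m.1)

/-- Termination condition (i): one player stayed at a state `b`, making it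
the reference point, and a different player subsequently also stays at `b`. -/
def TerminalStay (G : Game n) (a0 : Profile G) (h : Hist G) : Prop :=
  ∃ (h' : Hist G) (m : Move G) (i : Fin n),
    h = h' ++ [m] ∧ IsStay G a0 h' m ∧ refpt G a0 h' = state G a0 h' ∧
    proposer G a0 h' = some i ∧ i ≠ m.1

/-- Termination condition (ii): all `n` players consecutively pass
(the last `n` moves are passes and every player is among their movers). -/
def TerminalPass (G : Game n) (h : Hist G) : Prop :=
  n ≤ h.length ∧ (∀ m ∈ h.drop (h.length - n), m.2 = none) ∧
    (∀ i : Fin n, ∃ m ∈ h.drop (h.length - n), m.1 = i)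

/-- Terminal nodes of `Γ(a0,·,·)`. -/
def Terminal (G : Game n) (a0 : Profile G) (h : Hist G) : Prop :=
  TerminalStay G a0 h ∨ TerminalPass G h

/-- Number of predecessor nodes of `h` having the same state as `h` at which
the move `m` was made. -/
def countAct (G : Game n) (a0 : Profile G) (h : Hist G) (m : Move G) : ℕ :=
  ((Finset.range h.length).filter
    (fun t => h[t]? = some m ∧ state G a0 (h.take t) = state G a0 h)).card

/-- Availability of the choice `c` for player `i` at node `h`: pass is always
available, and an action `a` is available iff `i` has chosen `a` at fewer than
`k` predecessor nodes carrying the same state as `h`. -/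
def availAct (G : Game n) (a0 : Profile G) (k : ℕ) (h : Hist G) {i : Fin n}
    (c : Option (G.A i)) : Prop :=
  ∀ a : G.A i, c = some a → countAct G a0 h ⟨i, some a⟩ < k

/-- `h` is a (valid) node of the game tree of `Γ(a0,k,I)`: at each step the
recorded mover is the active player given by the player function `I`, the
chosen action was available, and no proper predecessor is terminal. -/
structure IsNode (G : Game n) (a0 : Profile G) (k : ℕ) (I : Hist G → Fin n)
    (h : Hist G) : Prop where
  mover : ∀ (t : ℕ) (ht : t < h.length), (h.get ⟨t, ht⟩).1 = I (h.take t)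
  avail : ∀ (t : ℕ) (ht : t < h.length), availAct G a0 k (h.take t) (h.get ⟨t, ht⟩).2
  nonterm : ∀ t < h.length, ¬ Terminal G a0 (h.take t)

/-- The player function is admissible: along every path of play the numbers of
nodes at which any two players have been active differ by at most one. -/
def Admissible (G : Game n) (a0 : Profile G) (k : ℕ) (I : Hist G → Fin n) : Prop :=
  ∀ h, IsNode G a0 k I h → ∀ i j : Fin n,
    (h.map Sigma.fst).count i ≤ (h.map Sigma.fst).count j + 1

/-- A pure strategy of player `i`: a choice (pass or an action) at every node. -/
abbrev Strategy (G : Game n) (i : Fin n) : Type := Hist G → Option (G.A i)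

/-- A pure strategy profile. -/
abbrev StratProfile (G : Game n) : Type := ∀ i, Strategy G i

/-- A strategy profile is valid if at every non-terminal node of the tree the
active player's prescribed choice is available. -/
def ValidProfile (G : Game n) (a0 : Profile G) (k : ℕ) (I : Hist G → Fin n)
    (σ : StratProfile G) : Prop :=
  ∀ h, IsNode G a0 k I h → ¬ Terminal G a0 h → availAct G a0 k h (σ (I h) h)

open Classical in
/-- Play according to `σ` for (at most) the given number of steps from a node,
stopping at terminal nodes. -/
noncomputable def playN (G : Game n) (a0 : Profile G) (I : Hist G → Fin n)
    (σ : StratProfile G) : ℕ → Hist G → Hist G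
  | 0, h => h
  | (t + 1), h =>
    if Terminal G a0 h then h
    else playN G a0 I σ t (h ++ [⟨I h, σ (I h) h⟩])

/-- A (generous) upper bound for the length of any play of `Γ(a0,k,I)`. -/
def bound (G : Game n) (k : ℕ) : ℕ :=
  ((k + 2) * (Fintype.card (Profile G) + 2) * ((∑ i, Fintype.card (G.A i)) + 2) + 2)
    * (n + 2) * 4

/-- The outcome of `σ` in the subgame rooted at `h`: the reference point at the
terminal node reached by playing `σ` from `h`. -/
noncomputable def outcomeFrom (G : Game n) (a0 : Profile G) (k : ℕ)
    (I : Hist G → Fin n) (σ : StratProfile G) (h : Hist G) : Profile G :=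
  refpt G a0 (playN G a0 I σ (bound G k + 1) h)

/-- The outcome of the strategy profile `σ` in `Γ(a0,k,I)`. -/
noncomputable def outcome (G : Game n) (a0 : Profile G) (k : ℕ)
    (I : Hist G → Fin n) (σ : StratProfile G) : Profile G :=
  outcomeFrom G a0 k I σ []

/-- `σ` satisfies the no-harm principle: every stay action it prescribes, at
every (on- or off-path) non-terminal node of the tree, does not harm any other
player relative to the reference point at that node. -/
def SatNHP (G : Game n) (a0 : Profile G) (k : ℕ) (I : Hist G → Fin n)
    (σ : StratProfile G) : Prop :=
  ∀ h, IsNode G a0 k I h → ¬ Terminal G a0 h →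
    σ (I h) h = some (state G a0 h (I h)) →
    ∀ j, j ≠ I h → G.u j (refpt G a0 h) ≤ G.u j (state G a0 h)

/-- No-harm equilibrium of `Γ(a0,k,I)`: a valid strategy profile satisfying the
NHP such that at every non-terminal node the active player's choice is a best
response among deviations keeping the profile valid and NHP-compliant. -/
def NHE (G : Game n) (a0 : Profile G) (k : ℕ) (I : Hist G → Fin n)
    (σ : StratProfile G) : Prop :=
  ValidProfile G a0 k I σ ∧ SatNHP G a0 k I σ ∧
  ∀ h, IsNode G a0 k I h → ¬ Terminal G a0 h →
    ∀ τ : Strategy G (I h),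
      ValidProfile G a0 k I (Function.update σ (I h) τ) →
      SatNHP G a0 k I (Function.update σ (I h) τ) →
      G.u (I h) (outcomeFrom G a0 k I (Function.update σ (I h) τ) h) ≤
        G.u (I h) (outcomeFrom G a0 k I σ h)

/-- Subgame perfect equilibrium of `Γ(a0,k,I)` (no NHP constraint). -/
def SPE (G : Game n) (a0 : Profile G) (k : ℕ) (I : Hist G → Fin n)
    (σ : StratProfile G) : Prop :=
  ValidProfile G a0 k I σ ∧
  ∀ h, IsNode G a0 k I h → ¬ Terminal G a0 h →
    ∀ τ : Strategy G (I h),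
      ValidProfile G a0 k I (Function.update σ (I h) τ) →
      G.u (I h) (outcomeFrom G a0 k I (Function.update σ (I h) τ) h) ≤
        G.u (I h) (outcomeFrom G a0 k I σ h)

/-- `b` Pareto dominates `a`. -/
def ParetoDom (G : Game n) (b a : Profile G) : Prop :=
  (∀ i, G.u i a ≤ G.u i b) ∧ ∃ i, G.u i a < G.u i b

/-- `a` is Pareto optimal. -/
def ParetoOpt (G : Game n) (a : Profile G) : Prop := ∀ b, ¬ ParetoDom G b a

/-- `b` strictly Pareto dominates `a`. -/
def StrictDom (G : Game n) (b a : Profile G) : Prop := ∀ i, G.u i a < G.u i b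

/-- `a` is weakly Pareto optimal. -/
def WeakParetoOpt (G : Game n) (a : Profile G) : Prop := ∀ b, ¬ StrictDom G b a

/-- Preferences are strict: each utility function is injective on profiles. -/
def StrictPrefs (G : Game n) : Prop := ∀ i, Function.Injective (G.u i)


section Aux

variable {n : ℕ} {G : Game n}

lemma fold3_append (a0 : Profile G) (h : Hist G) (m : Move G) :
    fold3 G a0 (h ++ [m]) = stepFold G (fold3 G a0 h) m := by
  simp [fold3, List.foldl_append]

lemma state_refpt_pass (a0 : Profile G) (h : Hist G) (i : Fin n) :
    state G a0 (h ++ [⟨i, none⟩]) = state G a0 h ∧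
    refpt G a0 (h ++ [⟨i, none⟩]) = refpt G a0 h := by
  constructor <;> simp [state, refpt, fold3_append, stepFold]

lemma state_refpt_stay (a0 : Profile G) (h : Hist G) (i : Fin n)
    (hst : state G a0 h i = state G a0 h i) :
    state G a0 (h ++ [⟨i, some (state G a0 h i)⟩]) = state G a0 h ∧
    refpt G a0 (h ++ [⟨i, some (state G a0 h i)⟩]) = state G a0 h := by
  constructor <;> simp [state, refpt, fold3_append, stepFold]

lemma refpt_append_of_not_stay (a0 : Profile G) (h : Hist G) (m : Move G)
    (hm : m.2 ≠ some (state G a0 h m.1)) :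
    refpt G a0 (h ++ [m]) = refpt G a0 h := by
  obtain ⟨i, c⟩ := m
  match c with
  | none => simp [refpt, fold3_append, stepFold]
  | some a =>
      have ha : a ≠ state G a0 h i := by
        intro hh; exact hm (by simp [hh])
      simp [refpt, fold3_append, stepFold, state] at *
      simp [ha]

end Aux
section Aux2

variable {n : ℕ} {G : Game n} {a0 : Profile G} {k : ℕ} {I : Hist G → Fin n}
  {σ : StratProfile G}

lemma playN_zero (h : Hist G) : playN G a0 I σ 0 h = h := rfl

lemma playN_succ_of_terminal (t : ℕ) (h : Hist G) (ht : Terminal G a0 h) :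
    playN G a0 I σ (t+1) h = h := by
  classical
  simp [playN, ht]

lemma playN_succ_of_not_terminal (t : ℕ) (h : Hist G) (ht : ¬ Terminal G a0 h) :
    playN G a0 I σ (t+1) h = playN G a0 I σ t (h ++ [⟨I h, σ (I h) h⟩]) := by
  classical
  simp [playN, ht]

lemma playN_of_terminal (t : ℕ) (h : Hist G) (ht : Terminal G a0 h) :
    playN G a0 I σ t h = h := by
  induction t with
  | zero => rfl
  | succ t ih => rw [playN_succ_of_terminal _ _ ht]

lemma playN_add (t s : ℕ) (h : Hist G) :
    playN G a0 I σ (t + s) h = playN G a0 I σ s (playN G a0 I σ t h) := by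
  induction t generalizing h with
  | zero => simp [playN_zero]
  | succ t ih =>
      by_cases hT : Terminal G a0 h
      · rw [playN_of_terminal _ _ hT, playN_of_terminal _ _ hT,
          playN_of_terminal _ _ hT]
      · have h1 : t + 1 + s = (t + s) + 1 := by omega
        rw [h1, playN_succ_of_not_terminal _ _ hT, playN_succ_of_not_terminal _ _ hT, ih]

lemma playN_absorb {t : ℕ} {h : Hist G} (hT : Terminal G a0 (playN G a0 I σ t h))
    {s : ℕ} (hs : t ≤ s) : playN G a0 I σ s h = playN G a0 I σ t h := by
  obtain ⟨d, rfl⟩ := Nat.exists_eq_add_of_le hs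
  rw [playN_add, playN_of_terminal _ _ hT]

lemma isNode_take {h : Hist G} (hnode : IsNode G a0 k I h) (t : ℕ) :
    IsNode G a0 k I (h.take t) := by
  have hlt : ∀ s, s < (h.take t).length → s < h.length ∧ s < t := by
    intro s hs
    rw [List.length_take] at hs
    omega
  have hget : ∀ s (hs : s < (h.take t).length),
      (h.take t).get ⟨s, hs⟩ = h.get ⟨s, (hlt s hs).1⟩ := by
    intro s hs
    simp [List.get_eq_getElem, List.getElem_take]
  have htt : ∀ s, s < t → (h.take t).take s = h.take s := by
    intro s hs
    rw [List.take_take, min_eq_left (le_of_lt hs)]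
  constructor
  · intro s hs
    rw [hget s hs, htt s (hlt s hs).2]
    exact hnode.mover s (hlt s hs).1
  · intro s hs
    rw [hget s hs, htt s (hlt s hs).2]
    exact hnode.avail s (hlt s hs).1
  · intro s hs
    rw [htt s (hlt s hs).2]
    exact hnode.nonterm s (hlt s hs).1

end Aux2
section Aux3

variable {n : ℕ} {G : Game n} {a0 : Profile G} {k : ℕ} {I : Hist G → Fin n}
  {σ : StratProfile G}

lemma isNode_append {h : Hist G} (hnode : IsNode G a0 k I h)
    (hterm : ¬ Terminal G a0 h) {c : Option (G.A (I h))}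
    (hc : availAct G a0 k h c) : IsNode G a0 k I (h ++ [⟨I h, c⟩]) := by
  have hlen : (h ++ [(⟨I h, c⟩ : Move G)]).length = h.length + 1 := by simp
  have htake : ∀ t, t ≤ h.length → (h ++ [(⟨I h, c⟩ : Move G)]).take t = h.take t := by
    intro t ht
    rw [List.take_append_of_le_length ht]
  have hget : ∀ (t : ℕ) (ht : t < h.length + 1),
      (h ++ [(⟨I h, c⟩ : Move G)]).get ⟨t, by omega⟩ =
        if hlt : t < h.length then h.get ⟨t, hlt⟩ else ⟨I h, c⟩ := by
    intro t ht
    by_cases hlt : t < h.length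
    · rw [dif_pos hlt]
      simp [List.get_eq_getElem, List.getElem_append_left hlt]
    · rw [dif_neg hlt]
      have : t = h.length := by omega
      subst this
      simp [List.get_eq_getElem]
  constructor
  · intro t ht
    have ht1 : t < h.length + 1 := by simpa using ht
    have := hget t ht1
    by_cases hlt : t < h.length
    · rw [dif_pos hlt] at this
      rw [show ((h ++ [(⟨I h, c⟩ : Move G)]).get ⟨t, ht⟩) = h.get ⟨t, hlt⟩ from this,
        htake t (le_of_lt hlt)]
      exact hnode.mover t hlt
    · rw [dif_neg hlt] at this
      have ht' : t = h.length := by omega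
      rw [show ((h ++ [(⟨I h, c⟩ : Move G)]).get ⟨t, ht⟩) = ⟨I h, c⟩ from this]
      subst ht'
      rw [htake _ le_rfl, List.take_length]
  · intro t ht
    have ht1 : t < h.length + 1 := by simpa using ht
    have := hget t ht1
    by_cases hlt : t < h.length
    · rw [dif_pos hlt] at this
      rw [show ((h ++ [(⟨I h, c⟩ : Move G)]).get ⟨t, ht⟩) = h.get ⟨t, hlt⟩ from this,
        htake t (le_of_lt hlt)]
      exact hnode.avail t hlt
    · rw [dif_neg hlt] at this
      have ht' : t = h.length := by omega
      rw [show ((h ++ [(⟨I h, c⟩ : Move G)]).get ⟨t, ht⟩) = ⟨I h, c⟩ from this]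
      subst ht'
      rw [htake _ le_rfl, List.take_length]
      exact hc
  · intro t ht
    have ht1 : t < h.length + 1 := by simpa using ht
    by_cases hlt : t < h.length
    · rw [htake t (le_of_lt hlt)]
      exact hnode.nonterm t hlt
    · have ht' : t = h.length := by omega
      subst ht'
      rw [htake _ le_rfl, List.take_length]
      exact hterm

lemma isNode_nil : IsNode G a0 k I ([] : Hist G) := by
  constructor <;> intro t ht <;> simp at ht

lemma isNode_playN (hσ : ValidProfile G a0 k I σ) {h : Hist G}
    (hnode : IsNode G a0 k I h) (t : ℕ) : IsNode G a0 k I (playN G a0 I σ t h) := by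
  induction t generalizing h with
  | zero => exact hnode
  | succ t ih =>
      by_cases hT : Terminal G a0 h
      · rw [playN_of_terminal _ _ hT]; exact hnode
      · rw [playN_succ_of_not_terminal _ _ hT]
        exact ih (isNode_append hnode hT (hσ h hnode hT))

lemma length_playN (hσ : ValidProfile G a0 k I σ) {h : Hist G} {t : ℕ}
    (hT : ¬ Terminal G a0 (playN G a0 I σ t h)) :
    (playN G a0 I σ t h).length = h.length + t := by
  induction t generalizing h with
  | zero => rfl
  | succ t ih =>
      by_cases hT0 : Terminal G a0 h
      · rw [playN_of_terminal _ _ hT0] at hT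
        exact absurd hT0 hT
      · rw [playN_succ_of_not_terminal _ _ hT0] at hT ⊢
        rw [ih hT]
        simp; omega

end Aux3
section Aux4

variable {n : ℕ} {G : Game n} {a0 : Profile G} {k : ℕ} {I : Hist G → Fin n}

lemma sum_count_eq_length (l : List (Fin n)) : ∑ i, l.count i = l.length := by
  induction l with
  | nil => simp
  | cons a l ih =>
      simp only [List.count_cons, List.length_cons, Finset.sum_add_distrib, ih]
      simp

lemma balanced_eq {f : Fin n → ℕ} (hn : 0 < n) (hbal : ∀ i j, f i ≤ f j + 1)
    {r : ℕ} (hsum : ∑ i, f i = r * n) : ∀ i, f i = r := by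
  have hne : Nonempty (Fin n) := ⟨⟨0, hn⟩⟩
  obtain ⟨i0, -, hmin⟩ := Finset.exists_min_image Finset.univ f
    (Finset.univ_nonempty_iff.mpr hne)
  set a := f i0 with ha
  have hlow : ∀ i, a ≤ f i := fun i => hmin i (Finset.mem_univ i)
  have hhigh : ∀ i, f i ≤ a + 1 := fun i => hbal i i0
  have hcard : (Finset.univ : Finset (Fin n)).card = n := by simp
  by_cases hall : ∀ i, f i = a
  · have : ∑ i, f i = n * a := by
      rw [Finset.sum_congr rfl (fun i _ => hall i)]
      simp [Finset.sum_const, hcard, mul_comm]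
    have hra : n * a = r * n := by rw [← this, hsum]
    have : a = r := by
      have := hra
      rw [mul_comm r n] at this
      exact Nat.eq_of_mul_eq_mul_left hn this
    intro i; rw [hall i, this]
  · by_cases hall2 : ∀ i, f i = a + 1
    · have : ∑ i, f i = n * (a + 1) := by
        rw [Finset.sum_congr rfl (fun i _ => hall2 i)]
        simp [Finset.sum_const, hcard, mul_comm]
      have hra : n * (a+1) = r * n := by rw [← this, hsum]
      have : a + 1 = r := by
        rw [mul_comm r n] at hra
        exact Nat.eq_of_mul_eq_mul_left hn hra
      intro i; rw [hall2 i, this]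
    · exfalso
      push_neg at hall hall2
      obtain ⟨j1, hj1⟩ := hall
      obtain ⟨i1, hi1⟩ := hall2
      have hj1' : a < f j1 := lt_of_le_of_ne (hlow j1) (Ne.symm hj1)
      have hi1' : f i1 < a + 1 := lt_of_le_of_ne (hhigh i1) hi1
      have h1 : n * a < ∑ i, f i := by
        have : ∑ _i : Fin n, a < ∑ i, f i :=
          Finset.sum_lt_sum (fun i _ => hlow i) ⟨j1, Finset.mem_univ j1, hj1'⟩
        simpa [Finset.sum_const, hcard, mul_comm] using this
      have h2 : ∑ i, f i < n * (a + 1) := by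
        have : ∑ i, f i < ∑ _i : Fin n, (a+1) :=
          Finset.sum_lt_sum (fun i _ => hhigh i) ⟨i1, Finset.mem_univ i1, hi1'⟩
        simpa [Finset.sum_const, hcard, mul_comm] using this
      rw [hsum, mul_comm r n] at h1 h2
      have har : a < r := lt_of_mul_lt_mul_left h1 (Nat.zero_le n)
      have hra : r < a + 1 := lt_of_mul_lt_mul_left h2 (Nat.zero_le n)
      omega

lemma count_take_mul (hadm : Admissible G a0 k I) {h : Hist G}
    (hnode : IsNode G a0 k I h) {r : ℕ} (hr : r * n ≤ h.length) (hn : 0 < n) :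
    ∀ i, ((h.take (r*n)).map Sigma.fst).count i = r := by
  apply balanced_eq hn
  · intro i j
    exact hadm _ (isNode_take hnode _) i j
  · rw [sum_count_eq_length]
    simp [List.length_take]
    omega

lemma count_block (hadm : Admissible G a0 k I) {h : Hist G}
    (hnode : IsNode G a0 k I h) {r : ℕ} (hr : (r+1) * n ≤ h.length) (hn : 0 < n) :
    ∀ i, (((h.take ((r+1)*n)).drop (r*n)).map Sigma.fst).count i = 1 := by
  intro i
  have hr' : r * n ≤ h.length := le_trans (by nlinarith) hr
  have hsplit : (h.take (r*n)) ++ ((h.take ((r+1)*n)).drop (r*n)) = h.take ((r+1)*n) := by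
    have h1 : (h.take ((r+1)*n)).take (r*n) = h.take (r*n) := by
      rw [List.take_take, min_eq_left (by nlinarith)]
    conv_rhs => rw [← List.take_append_drop (r*n) (h.take ((r+1)*n))]
    rw [h1]
  have hc1 := count_take_mul hadm hnode hr' hn i
  have hc2 := count_take_mul hadm hnode (r := r+1) hr hn i
  have : (((h.take (r*n)) ++ ((h.take ((r+1)*n)).drop (r*n))).map Sigma.fst).count i = r + 1 := by
    rw [hsplit]; exact hc2
  rw [List.map_append, List.count_append, hc1] at this
  omega

end Aux4
section Aux5

open Classical

variable {n : ℕ} {G : Game n} {a0 : Profile G} {k : ℕ} {I : Hist G → Fin n}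

lemma nonpass_in_block (hadm : Admissible G a0 k I) {h : Hist G}
    (hnode : IsNode G a0 k I h) (hterm : ¬ Terminal G a0 h) {r : ℕ}
    (hr : (r+1) * n ≤ h.length) (hn : 0 < n) :
    ∃ m ∈ (h.take ((r+1)*n)).drop (r*n), m.2 ≠ none := by
  by_contra hcon
  push_neg at hcon
  set p := h.take ((r+1)*n) with hp
  have hplen : p.length = (r+1)*n := by
    simp [hp, List.length_take]; omega
  have hTP : TerminalPass G p := by
    refine ⟨by rw [hplen]; nlinarith, ?_, ?_⟩
    · intro m hm
      have hsub : p.length - n = r * n := by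
        rw [hplen, Nat.succ_mul]; omega
      rw [hsub] at hm
      exact hcon m hm
    · intro i
      have hcnt := count_block hadm hnode hr hn i
      have hpos : 0 < ((p.drop (r*n)).map Sigma.fst).count i := by
        rw [hp, hcnt]; omega
      rw [List.count_pos_iff] at hpos
      obtain ⟨m, hm, hmi⟩ := List.mem_map.mp hpos
      have hsub : p.length - n = r * n := by
        rw [hplen, Nat.succ_mul]; omega
      exact ⟨m, by rw [hsub]; exact hm, hmi⟩
  have hT : Terminal G a0 p := Or.inr hTP
  by_cases hlt : (r+1)*n < h.length
  · exact hnode.nonterm _ hlt hT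
  · have : (r+1)*n = h.length := by omega
    rw [hp, this, List.take_length] at hT
    exact hterm hT

lemma card_nonpass_le {h : Hist G} (hnode : IsNode G a0 k I h) :
    ((Finset.range h.length).filter
      (fun t => ∃ m : Move G, h[t]? = some m ∧ m.2 ≠ none)).card ≤
      k * (Fintype.card (Profile G) * (Fintype.card (Move G) + 1)) := by
  classical
  set Np := (Finset.range h.length).filter
      (fun t => ∃ m : Move G, h[t]? = some m ∧ m.2 ≠ none) with hNp
  set f : ℕ → Profile G × Option (Move G) :=
      fun t => (state G a0 (h.take t), h[t]?) with hf
  have hfiber : ∀ b ∈ Np.image f, (Np.filter (fun x => f x = b)).card ≤ k := by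
    intro b _
    by_contra hcon
    push_neg at hcon
    set F := Np.filter (fun x => f x = b) with hF
    have hFne : F.Nonempty := Finset.card_pos.mp (by omega)
    set t0 := F.max' hFne with ht0
    have ht0F : t0 ∈ F := F.max'_mem hFne
    have ht0Np : t0 ∈ Np := Finset.mem_of_mem_filter _ ht0F
    simp only [hNp, Finset.mem_filter, Finset.mem_range] at ht0Np
    obtain ⟨ht0r, m, hm, hmnp⟩ := ht0Np
    obtain ⟨a, hma⟩ := Option.ne_none_iff_exists'.mp hmnp
    -- availability at t0
    have hget : h.get ⟨t0, ht0r⟩ = m := by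
      have := List.getElem?_eq_some_iff.mp hm
      obtain ⟨hlt, hg⟩ := this
      simpa [List.get_eq_getElem] using hg
    have havail := hnode.avail t0 ht0r
    rw [hget, hma] at havail
    have hcount : countAct G a0 (h.take t0) ⟨m.1, some a⟩ < k := havail a rfl
    have hmeq : (⟨m.1, some a⟩ : Move G) = m := by
      rw [← hma]
    rw [hmeq] at hcount
    -- now show countAct ≥ k
    have hsubset : F.erase t0 ⊆ (Finset.range (h.take t0).length).filter
        (fun t => (h.take t0)[t]? = some m ∧
          state G a0 ((h.take t0).take t) = state G a0 (h.take t0)) := by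
      intro t htF
      have htne : t ≠ t0 := Finset.ne_of_mem_erase htF
      have htF' : t ∈ F := Finset.mem_of_mem_erase htF
      have htlt : t < t0 := lt_of_le_of_ne (F.le_max' t htF') htne
      have htNp : t ∈ Np := Finset.mem_of_mem_filter _ htF'
      rw [hNp] at htNp
      have hfb : f t = b := (Finset.mem_filter.mp htF').2
      have hfb0 : f t0 = b := (Finset.mem_filter.mp ht0F).2
      have hfeq : f t = f t0 := by rw [hfb, hfb0]
      have hst : state G a0 (h.take t) = state G a0 (h.take t0) := by
        have := congrArg Prod.fst hfeq
        simpa [hf] using this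
      have hgt : h[t]? = h[t0]? := by
        have := congrArg Prod.snd hfeq
        simpa [hf] using this
      refine Finset.mem_filter.mpr ⟨?_, ?_, ?_⟩
      · rw [Finset.mem_range, List.length_take]
        omega
      · rw [List.getElem?_take_of_lt htlt, hgt, hm]
      · rw [List.take_take, min_eq_left (le_of_lt htlt), hst]
    have hge : k ≤ countAct G a0 (h.take t0) m := by
      have hcard : F.card - 1 ≤ (F.erase t0).card := by
        rw [Finset.card_erase_of_mem ht0F]
      have := Finset.card_le_card hsubset
      unfold countAct
      omega
    omega
  calc Np.card ≤ k * (Np.image f).card := Finset.card_le_mul_card_image Np k hfiber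
    _ ≤ k * Fintype.card (Profile G × Option (Move G)) := by
        apply Nat.mul_le_mul_left
        exact le_trans (Finset.card_le_univ _) (by simp)
    _ = k * (Fintype.card (Profile G) * (Fintype.card (Move G) + 1)) := by
        simp [Fintype.card_prod, Fintype.card_option]

end Aux5
section Aux6

variable {n : ℕ} {G : Game n} {a0 : Profile G} {k : ℕ} {I : Hist G → Fin n}
  {σ : StratProfile G}

/-- Max length of a nonterminal node. -/
def L0 {n : ℕ} (G : Game n) (k : ℕ) : ℕ :=
  n * (k * (Fintype.card (Profile G) * (Fintype.card (Move G) + 1)) + 1)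

lemma length_le_of_not_terminal (hadm : Admissible G a0 k I) {h : Hist G}
    (hnode : IsNode G a0 k I h) (hterm : ¬ Terminal G a0 h) (hn : 0 < n) :
    h.length ≤ L0 G k := by
  classical
  set K := k * (Fintype.card (Profile G) * (Fintype.card (Move G) + 1)) with hK
  set L := h.length with hL
  set q := L / n with hq
  set Np := (Finset.range L).filter
    (fun t => ∃ m : Move G, h[t]? = some m ∧ m.2 ≠ none) with hNp
  have hNpK : Np.card ≤ K := card_nonpass_le hnode
  have hex : ∀ r, r < q → ∃ t, t ∈ Np ∧ r*n ≤ t ∧ t < (r+1)*n := by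
    intro r hr
    have hrn : (r+1)*n ≤ L := by
      have h1 : r + 1 ≤ q := hr
      calc (r+1)*n ≤ q*n := Nat.mul_le_mul_right n h1
        _ ≤ L := by rw [hq]; exact Nat.div_mul_le_self L n
    obtain ⟨m, hm, hmnp⟩ := nonpass_in_block hadm hnode hterm hrn hn
    obtain ⟨j, hj, hjm⟩ := List.getElem_of_mem hm
    have hseglen : ((h.take ((r+1)*n)).drop (r*n)).length = n := by
      simp [List.length_drop, List.length_take]
      rw [min_eq_left hrn, Nat.succ_mul]
      omega
    have hjn : j < n := by rw [hseglen] at hj; exact hj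
    have hidx : r*n + j < (r+1)*n := by rw [Nat.succ_mul]; omega
    have hidxL : r*n + j < L := lt_of_lt_of_le hidx hrn
    have hgm : h[r*n + j]? = some m := by
      have h1 : ((h.take ((r+1)*n)).drop (r*n))[j] = (h.take ((r+1)*n))[r*n + j]'(by
          rw [List.length_take, min_eq_left hrn]; exact hidx) := by
        rw [List.getElem_drop]
      have h2 : (h.take ((r+1)*n))[r*n + j]'(by
          rw [List.length_take, min_eq_left hrn]; exact hidx) = h[r*n + j]'hidxL := by
        rw [List.getElem_take]
      rw [List.getElem?_eq_getElem hidxL, ← h2, ← h1, hjm]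
    refine ⟨r*n + j, ?_, by omega, hidx⟩
    simp only [hNp, Finset.mem_filter, Finset.mem_range]
    exact ⟨hidxL, m, hgm, hmnp⟩
  have hqK : q ≤ K := by
    classical
    have hcard : (Finset.range q).card ≤ Np.card := by
      apply Finset.card_le_card_of_injOn
        (f := fun r => if hr : r < q then Classical.choose (hex r hr) else 0)
      · intro r hrq
        have hr : r < q := Finset.mem_range.mp hrq
        dsimp only
        rw [dif_pos hr]
        exact (Classical.choose_spec (hex r hr)).1
      · intro r hrq r' hrq' heq
        have hr : r < q := Finset.mem_range.mp (Finset.mem_coe.mp hrq)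
        have hr' : r' < q := Finset.mem_range.mp (Finset.mem_coe.mp hrq')
        simp only [dif_pos hr, dif_pos hr'] at heq
        obtain ⟨-, hb1, hb2⟩ := Classical.choose_spec (hex r hr)
        obtain ⟨-, hb1', hb2'⟩ := Classical.choose_spec (hex r' hr')
        rw [heq] at hb1 hb2
        by_contra hne
        rcases Nat.lt_or_ge r r' with hlt | hge
        · have : (r+1)*n ≤ r'*n := Nat.mul_le_mul_right n hlt
          omega
        · have hlt : r' < r := by omega
          have : (r'+1)*n ≤ r*n := Nat.mul_le_mul_right n hlt
          omega
    simpa using le_trans hcard hNpK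
  have hmod := Nat.div_add_mod L n
  have hmlt : L % n < n := Nat.mod_lt _ hn
  have h1 : L < n*q + n := by
    rw [hq] at *
    linarith
  have h2 : n*q ≤ n*K := Nat.mul_le_mul (le_refl n) hqK
  rw [hL] at *
  show h.length ≤ n * (K + 1)
  rw [Nat.mul_succ]
  linarith

lemma exists_terminal_playN (hadm : Admissible G a0 k I)
    (hσ : ValidProfile G a0 k I σ) {h : Hist G} (hnode : IsNode G a0 k I h)
    (hn : 0 < n) :
    ∃ t, t ≤ L0 G k + 1 ∧ Terminal G a0 (playN G a0 I σ t h) := by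
  by_contra hcon
  push_neg at hcon
  have hT : ¬ Terminal G a0 (playN G a0 I σ (L0 G k + 1) h) := hcon _ le_rfl
  have hnode' := isNode_playN hσ hnode (L0 G k + 1)
  have hlen := length_le_of_not_terminal hadm hnode' hT hn
  rw [length_playN hσ hT] at hlen
  omega

lemma playN_stab (hadm : Admissible G a0 k I)
    (hσ : ValidProfile G a0 k I σ) {h : Hist G} (hnode : IsNode G a0 k I h)
    (hn : 0 < n) {s s' : ℕ} (hs : L0 G k + 1 ≤ s) (hs' : L0 G k + 1 ≤ s') :
    playN G a0 I σ s h = playN G a0 I σ s' h := by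
  obtain ⟨t, ht, hT⟩ := exists_terminal_playN hadm hσ hnode hn
  rw [playN_absorb hT (le_trans ht hs), playN_absorb hT (le_trans ht hs')]

lemma L0_lt_bound (hn : 0 < n) (hk : 0 < k) : L0 G k + 1 ≤ bound G k := by
  have hP : 1 ≤ Fintype.card (Profile G) := Fintype.card_pos
  have hM : Fintype.card (Move G) = (∑ i, Fintype.card (G.A i)) + n := by
    rw [Fintype.card_sigma]
    simp [Fintype.card_option, Finset.sum_add_distrib]
  have hS : n ≤ ∑ i, Fintype.card (G.A i) := by
    calc n = ∑ _i : Fin n, 1 := by simp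
      _ ≤ ∑ i, Fintype.card (G.A i) :=
        Finset.sum_le_sum (fun i _ => Fintype.card_pos)
  set P := Fintype.card (Profile G) with hPdef
  set S := ∑ i, Fintype.card (G.A i) with hSdef
  rw [L0, hM, bound]
  rw [← hSdef, ← hPdef]
  set X := k * P * (S+2) with hX
  have e1 : k * (P*(S+n+1)) ≤ 2*X := by
    have h1 : S+n+1 ≤ 2*S+4 := by omega
    calc k * (P*(S+n+1)) = (k*P)*(S+n+1) := by ring
      _ ≤ (k*P)*(2*S+4) := Nat.mul_le_mul_left _ h1
      _ = 2*X := by rw [hX]; ring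
  have e2 : n * (k * (P*(S+n+1)) + 1) + 1 ≤ 2*n*X + n + 1 := by
    have := Nat.mul_le_mul_left n (Nat.add_le_add_right e1 1)
    calc n * (k * (P*(S+n+1)) + 1) + 1 ≤ n * (2*X + 1) + 1 := by omega
      _ = 2*n*X + n + 1 := by ring
  have e3 : 2*n*X ≤ 4*(n+2)*X := Nat.mul_le_mul_right X (by omega)
  have e4 : X ≤ (k+2)*(P+2)*(S+2) :=
    Nat.mul_le_mul (Nat.mul_le_mul (by omega) (by omega)) (by omega)
  have e5 : (X+2)*(n+2)*4 ≤ ((k+2)*(P+2)*(S+2)+2)*(n+2)*4 :=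
    Nat.mul_le_mul_right 4 (Nat.mul_le_mul_right (n+2) (by omega))
  have e6 : (X+2)*(n+2)*4 = 4*(n+2)*X + 8*(n+2) := by ring
  omega

end Aux6
section Aux7

variable {n : ℕ} {G : Game n} {a0 : Profile G} {k : ℕ} {I : Hist G → Fin n}
  {σ : StratProfile G}

lemma refpt_nil : refpt G a0 ([] : Hist G) = a0 := rfl

lemma refpt_mono (hσ : ValidProfile G a0 k I σ) (hNHP : SatNHP G a0 k I σ) (j : Fin n)
    {h0 : Hist G} (hnode : IsNode G a0 k I h0) (t : ℕ)
    (hnostay : ∀ s, s < t → ¬ Terminal G a0 (playN G a0 I σ s h0) →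
      I (playN G a0 I σ s h0) = j →
      σ j (playN G a0 I σ s h0) ≠ some (state G a0 (playN G a0 I σ s h0) j)) :
    G.u j (refpt G a0 h0) ≤ G.u j (refpt G a0 (playN G a0 I σ t h0)) := by
  induction t generalizing h0 with
  | zero => rw [playN_zero]
  | succ t ih =>
      by_cases hT : Terminal G a0 h0
      · rw [playN_of_terminal _ _ hT]
      · rw [playN_succ_of_not_terminal _ _ hT]
        have hnode1 : IsNode G a0 k I (h0 ++ [⟨I h0, σ (I h0) h0⟩]) :=
          isNode_append hnode hT (hσ h0 hnode hT)
        have hstep : G.u j (refpt G a0 h0) ≤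
            G.u j (refpt G a0 (h0 ++ [⟨I h0, σ (I h0) h0⟩])) := by
          by_cases hstay : σ (I h0) h0 = some (state G a0 h0 (I h0))
          · have hrf : refpt G a0 (h0 ++ [⟨I h0, σ (I h0) h0⟩]) = state G a0 h0 := by
              rw [hstay]
              exact (state_refpt_stay a0 h0 (I h0) rfl).2
            rw [hrf]
            by_cases hij : I h0 = j
            · exfalso
              refine hnostay 0 (by omega) (by rw [playN_zero]; exact hT)
                (by rw [playN_zero]; exact hij) ?_
              rw [playN_zero, ← hij]
              exact hstay
            · exact hNHP h0 hnode hT hstay j (fun hh => hij hh.symm)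
          · rw [refpt_append_of_not_stay a0 h0 _ hstay]
        refine le_trans hstep (ih hnode1 ?_)
        intro s hs hT' hI' hst'
        refine hnostay (s+1) (by omega) ?_ ?_ ?_
        · rw [playN_succ_of_not_terminal _ _ hT]; exact hT'
        · rw [playN_succ_of_not_terminal _ _ hT]; exact hI'
        · rw [playN_succ_of_not_terminal _ _ hT]; exact hst'

theorem nhe_outcome_eq (hn : 2 ≤ n) (hG : StrictPrefs G) (a : Profile G)
    (ha : ParetoOpt G a) (hk : 0 < k) (hadm : Admissible G a k I)
    (σ : StratProfile G) (hσ : NHE G a k I σ) : outcome G a k I σ = a := by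
  classical
  obtain ⟨hval, hNHP, hbest⟩ := hσ
  have hn0 : 0 < n := by omega
  have key : ∀ j, G.u j a ≤ G.u j (outcome G a k I σ) := by
    intro j
    by_cases hex : ∃ s, ¬ Terminal G a (playN G a I σ s []) ∧
        I (playN G a I σ s []) = j ∧
        σ j (playN G a I σ s []) = some (state G a (playN G a I σ s []) j)
    · set s0 := Nat.find hex with hs0def
      obtain ⟨hT0, hIj, hstay0⟩ := Nat.find_spec hex
      have hmin := fun s (hs : s < s0) => Nat.find_min hex hs
      set h0 := playN G a I σ s0 [] with hh0
      have hnode0 : IsNode G a k I h0 := isNode_playN hval isNode_nil s0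
      -- utility of refpt h0 at least that of a
      have step1 : G.u j a ≤ G.u j (refpt G a h0) := by
        have := refpt_mono hval hNHP j isNode_nil s0 (fun s hs hT hI hst => hmin s hs ⟨hT, hI, hst⟩)
        rw [refpt_nil] at this
        exact this
      -- the always-pass deviation
      clear_value s0
      clear hs0def hex
      subst hIj
      set τ : Strategy G (I h0) := fun _ => none with hτ
      set σ' := Function.update σ (I h0) τ with hσ'
      have hσ'app : ∀ h : Hist G, σ' (I h) h =
          if hih : I h = I h0 then none else σ (I h) h := by
        intro h
        by_cases hih : I h = I h0
        · rw [dif_pos hih, hσ']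
          rw [hih]
          rw [Function.update_self]
        · rw [dif_neg hih, hσ']
          rw [Function.update_of_ne hih]
      have hval' : ValidProfile G a k I σ' := by
        intro h hnode hterm
        rw [hσ'app h]
        by_cases hih : I h = I h0
        · rw [dif_pos hih]; intro x hx; simp at hx
        · rw [dif_neg hih]; exact hval h hnode hterm
      have hNHP' : SatNHP G a k I σ' := by
        intro h hnode hterm hst
        rw [hσ'app h] at hst
        by_cases hih : I h = I h0
        · rw [dif_pos hih] at hst; simp at hst
        · rw [dif_neg hih] at hst
          exact hNHP h hnode hterm hst
      have hineq := hbest h0 hnode0 hT0 τ hval' hNHP'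
      -- deviation outcome at least refpt h0
      have step2 : G.u (I h0) (refpt G a h0) ≤
          G.u (I h0) (outcomeFrom G a k I σ' h0) := by
        refine refpt_mono hval' hNHP' (I h0) hnode0 (bound G k + 1) ?_
        intro s hs hT hI hst
        rw [hσ', Function.update_self] at hst
        simp [hτ] at hst
      -- on-path outcome identification
      have step3 : outcomeFrom G a k I σ h0 = outcome G a k I σ := by
        rw [outcome, outcomeFrom, outcomeFrom, hh0, ← playN_add]
        have hb := L0_lt_bound (G := G) (k := k) hn0 hk
        exact congrArg (refpt G a) (playN_stab hadm hval isNode_nil hn0 (by omega) (by omega))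
      rw [step3] at hineq
      calc G.u (I h0) a ≤ G.u (I h0) (refpt G a h0) := step1
        _ ≤ G.u (I h0) (outcomeFrom G a k I σ' h0) := step2
        _ ≤ G.u (I h0) (outcome G a k I σ) := hineq
    · push_neg at hex
      have := refpt_mono hval hNHP j isNode_nil (bound G k + 1)
        (fun s _ hT hI => hex s hT hI)
      rw [refpt_nil] at this
      exact this
  by_contra hne
  have hlt : ∀ j, G.u j a < G.u j (outcome G a k I σ) := by
    intro j
    refine lt_of_le_of_ne (key j) (fun heq => hne ?_)
    exact (hG j heq.symm)
  exact ha (outcome G a k I σ) ⟨fun i => le_of_lt (hlt i), ⟨0, hn0⟩, hlt ⟨0, hn0⟩⟩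

end Aux7
section Aux8

variable {n : ℕ} {G : Game n} {a0 : Profile G} {k : ℕ} {I : Hist G → Fin n}
  {σ : StratProfile G}

/-- Locally allowed choices: available, and stays must respect the NHP. -/
def Allowed (G : Game n) (a0 : Profile G) (k : ℕ) (I : Hist G → Fin n)
    (h : Hist G) (c : Option (G.A (I h))) : Prop :=
  availAct G a0 k h c ∧
    (c = some (state G a0 h (I h)) →
      ∀ j, j ≠ I h → G.u j (refpt G a0 h) ≤ G.u j (state G a0 h))

lemma allowed_none (h : Hist G) : Allowed G a0 k I h none :=
  ⟨fun x hx => by simp at hx, fun hc => by simp at hc⟩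

lemma exists_best (h : Hist G) (F : Option (G.A (I h)) → ℝ) :
    ∃ c, Allowed G a0 k I h c ∧ ∀ c', Allowed G a0 k I h c' → F c' ≤ F c := by
  classical
  obtain ⟨c, hc, hmax⟩ := Finset.exists_max_image
    (Finset.univ.filter (Allowed G a0 k I h)) F
    ⟨none, Finset.mem_filter.mpr ⟨Finset.mem_univ _, allowed_none h⟩⟩
  refine ⟨c, (Finset.mem_filter.mp hc).2, fun c' hc' => hmax c'
    (Finset.mem_filter.mpr ⟨Finset.mem_univ _, hc'⟩)⟩

/-- The optimal choice at `h` against continuation values `W`. -/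
noncomputable def bestC (G : Game n) (a0 : Profile G) (k : ℕ) (I : Hist G → Fin n)
    (W : Hist G → Profile G) (h : Hist G) : Option (G.A (I h)) :=
  Classical.choose
    (exists_best (a0 := a0) (k := k) h (fun c => G.u (I h) (W (h ++ [⟨I h, c⟩]))))

lemma bestC_spec (W : Hist G → Profile G) (h : Hist G) :
    Allowed G a0 k I h (bestC G a0 k I W h) ∧
      ∀ c', Allowed G a0 k I h c' →
        G.u (I h) (W (h ++ [⟨I h, c'⟩])) ≤
          G.u (I h) (W (h ++ [⟨I h, bestC G a0 k I W h⟩])) := by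
  unfold bestC
  exact Classical.choose_spec
    (exists_best (a0 := a0) (k := k) h
      (fun c => G.u (I h) (W (h ++ [⟨I h, c⟩]))))

lemma bestC_allowed (W : Hist G → Profile G) (h : Hist G) :
    Allowed G a0 k I h (bestC G a0 k I W h) := (bestC_spec W h).1

lemma bestC_max (W : Hist G → Profile G) (h : Hist G) {c : Option (G.A (I h))}
    (hc : Allowed G a0 k I h c) :
    G.u (I h) (W (h ++ [⟨I h, c⟩])) ≤
      G.u (I h) (W (h ++ [⟨I h, bestC G a0 k I W h⟩])) :=
  (bestC_spec W h).2 c hc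

open Classical in
/-- Backward induction values with fuel. -/
noncomputable def V (G : Game n) (a0 : Profile G) (k : ℕ) (I : Hist G → Fin n) :
    ℕ → Hist G → Profile G
  | 0, h => refpt G a0 h
  | (d+1), h =>
      if Terminal G a0 h then refpt G a0 h
      else V G a0 k I d
        (h ++ [⟨I h, bestC G a0 k I (fun h' => V G a0 k I d h') h⟩])

lemma V_terminal (d : ℕ) (h : Hist G) (hT : Terminal G a0 h) :
    V G a0 k I d h = refpt G a0 h := by
  classical
  cases d with
  | zero => rfl
  | succ d => simp [V, hT]

lemma V_succ_not_terminal (d : ℕ) (h : Hist G) (hT : ¬ Terminal G a0 h) :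
    V G a0 k I (d+1) h =
      V G a0 k I d (h ++ [⟨I h, bestC G a0 k I (fun h' => V G a0 k I d h') h⟩]) := by
  classical
  simp [V, hT]

/-- The backward induction strategy profile. -/
noncomputable def sigmaHat (G : Game n) (a0 : Profile G) (k : ℕ)
    (I : Hist G → Fin n) : StratProfile G := fun i h =>
  if hih : I h = i then
    hih ▸ (bestC G a0 k I (V G a0 k I (L0 G k + 1 - (h.length + 1))) h)
  else none

lemma sigmaHat_apply (h : Hist G) :
    sigmaHat G a0 k I (I h) h =
      bestC G a0 k I (V G a0 k I (L0 G k + 1 - (h.length + 1))) h := by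
  simp [sigmaHat]

end Aux8
section Aux9

variable {n : ℕ} {G : Game n} {a0 : Profile G} {k : ℕ} {I : Hist G → Fin n}
  {σ : StratProfile G}

lemma length_le_of_isNode (hadm : Admissible G a0 k I) {h : Hist G}
    (hnode : IsNode G a0 k I h) (hn : 0 < n) : h.length ≤ L0 G k + 1 := by
  by_cases hT : Terminal G a0 h
  · rcases Nat.eq_zero_or_pos h.length with h0 | h0
    · omega
    · have hpre : ¬ Terminal G a0 (h.take (h.length - 1)) :=
        hnode.nonterm _ (by omega)
      have := length_le_of_not_terminal hadm (isNode_take hnode (h.length - 1)) hpre hn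
      rw [List.length_take] at this
      omega
  · have := length_le_of_not_terminal hadm hnode hT hn
    omega

lemma exists_terminal_playN' (hadm : Admissible G a0 k I)
    (hσ : ValidProfile G a0 k I σ) {h : Hist G} (hnode : IsNode G a0 k I h)
    (hn : 0 < n) :
    ∃ t, t + h.length ≤ L0 G k + 1 ∧ Terminal G a0 (playN G a0 I σ t h) := by
  by_cases hT : Terminal G a0 h
  · exact ⟨0, by simpa using length_le_of_isNode hadm hnode hn, by rw [playN_zero]; exact hT⟩
  · have hlen : h.length ≤ L0 G k := length_le_of_not_terminal hadm hnode hT hn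
    refine ⟨L0 G k + 1 - h.length, by omega, ?_⟩
    by_contra hcon
    have hnode' := isNode_playN hσ hnode (L0 G k + 1 - h.length)
    have := length_le_of_not_terminal hadm hnode' hcon hn
    rw [length_playN hσ hcon] at this
    omega

lemma playN_stab' (hadm : Admissible G a0 k I)
    (hσ : ValidProfile G a0 k I σ) {h : Hist G} (hnode : IsNode G a0 k I h)
    (hn : 0 < n) {s s' : ℕ} (hs : L0 G k + 1 - h.length ≤ s)
    (hs' : L0 G k + 1 - h.length ≤ s') :
    playN G a0 I σ s h = playN G a0 I σ s' h := by
  obtain ⟨t, ht, hT⟩ := exists_terminal_playN' hadm hσ hnode hn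
  rw [playN_absorb hT (show t ≤ s by omega), playN_absorb hT (show t ≤ s' by omega)]

lemma V_eq_play : ∀ d (h : Hist G), d = L0 G k + 1 - h.length →
    V G a0 k I d h = refpt G a0 (playN G a0 I (sigmaHat G a0 k I) d h) := by
  intro d
  induction d with
  | zero => intro h _; rw [playN_zero]; rfl
  | succ d ih =>
      intro h hd
      by_cases hT : Terminal G a0 h
      · rw [V_terminal _ _ hT, playN_of_terminal _ _ hT]
      · rw [V_succ_not_terminal _ _ hT, playN_succ_of_not_terminal _ _ hT,
          sigmaHat_apply]
        have he : L0 G k + 1 - (h.length + 1) = d := by omega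
        rw [he]
        exact ih _ (by simp; omega)

lemma sigmaHat_valid : ValidProfile G a0 k I (sigmaHat G a0 k I) := by
  intro h hnode hterm
  rw [sigmaHat_apply]
  exact (bestC_allowed _ h).1

lemma sigmaHat_NHP : SatNHP G a0 k I (sigmaHat G a0 k I) := by
  intro h hnode hterm hst
  rw [sigmaHat_apply] at hst
  exact (bestC_allowed _ h).2 hst

lemma outcomeFrom_sigmaHat (hadm : Admissible G a0 k I) {h : Hist G}
    (hnode : IsNode G a0 k I h) (hn : 0 < n) (hk : 0 < k) :
    outcomeFrom G a0 k I (sigmaHat G a0 k I) h =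
      V G a0 k I (L0 G k + 1 - h.length) h := by
  rw [outcomeFrom, V_eq_play _ h rfl]
  have hb := L0_lt_bound (G := G) (k := k) hn hk
  exact congrArg (refpt G a0)
    (playN_stab' hadm sigmaHat_valid hnode hn (by omega) le_rfl)

lemma deviation_le (hadm : Admissible G a0 k I) (hn : 0 < n) (hk : 0 < k)
    {i : Fin n} {τ : Strategy G i}
    (hval' : ValidProfile G a0 k I (Function.update (sigmaHat G a0 k I) i τ))
    (hNHP' : SatNHP G a0 k I (Function.update (sigmaHat G a0 k I) i τ)) :
    ∀ d (h : Hist G), IsNode G a0 k I h → L0 G k + 1 - h.length ≤ d →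
      G.u i (outcomeFrom G a0 k I (Function.update (sigmaHat G a0 k I) i τ) h) ≤
        G.u i (V G a0 k I (L0 G k + 1 - h.length) h) := by
  set σ' := Function.update (sigmaHat G a0 k I) i τ with hσ'def
  have hb := L0_lt_bound (G := G) (k := k) hn hk
  intro d
  induction d with
  | zero =>
      intro h hnode hd
      by_cases hT : Terminal G a0 h
      · rw [V_terminal _ _ hT, outcomeFrom, playN_of_terminal _ _ hT]
      · exfalso
        have := length_le_of_not_terminal hadm hnode hT hn
        omega
  | succ d ih =>
      intro h hnode hd
      by_cases hT : Terminal G a0 h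
      · rw [V_terminal _ _ hT, outcomeFrom, playN_of_terminal _ _ hT]
      · have hlen : h.length ≤ L0 G k := length_le_of_not_terminal hadm hnode hT hn
        set m : Move G := ⟨I h, σ' (I h) h⟩ with hm
        have hnode1 : IsNode G a0 k I (h ++ [m]) :=
          isNode_append hnode hT (hval' h hnode hT)
        have hout : outcomeFrom G a0 k I σ' h = outcomeFrom G a0 k I σ' (h ++ [m]) := by
          rw [outcomeFrom, outcomeFrom, playN_succ_of_not_terminal _ _ hT]
          exact congrArg (refpt G a0)
            (playN_stab' hadm hval' hnode1 hn (by simp; omega) (by simp; omega))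
        have hDe : L0 G k + 1 - h.length = (L0 G k + 1 - (h.length + 1)) + 1 := by
          omega
        have hih := ih (h ++ [m]) hnode1 (by simp; omega)
        have hlen1 : L0 G k + 1 - (h ++ [m]).length = L0 G k + 1 - (h.length + 1) := by
          simp
        rw [hlen1] at hih
        rw [hout, hDe, V_succ_not_terminal _ _ hT]
        by_cases hii : I h = i
        · -- deviator's node: m's choice is allowed, bestC is at least as good
          have hallow : Allowed G a0 k I h (σ' (I h) h) :=
            ⟨hval' h hnode hT, fun hst => hNHP' h hnode hT hst⟩
          have hmax := bestC_max (a0 := a0) (k := k)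
            (fun h' => V G a0 k I (L0 G k + 1 - (h.length + 1)) h') h hallow
          refine le_trans hih ?_
          rw [← hii]
          exact hmax
        · -- another player's node: σ' plays exactly the bestC move
          have hmove : σ' (I h) h =
              bestC G a0 k I (V G a0 k I (L0 G k + 1 - (h.length + 1))) h := by
            rw [hσ'def, Function.update_of_ne hii, sigmaHat_apply]
          have hEq : h ++ [m] = h ++ [(⟨I h, bestC G a0 k I
              (fun h' => V G a0 k I (L0 G k + 1 - (h.length + 1)) h') h⟩ : Move G)] := by
            rw [hm, hmove]
          rw [← hEq]
          exact hih

lemma sigmaHat_NHE (hadm : Admissible G a0 k I) (hn : 0 < n) (hk : 0 < k) :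
    NHE G a0 k I (sigmaHat G a0 k I) := by
  refine ⟨sigmaHat_valid, sigmaHat_NHP, ?_⟩
  intro h hnode hterm τ hval' hNHP'
  rw [outcomeFrom_sigmaHat hadm hnode hn hk]
  exact deviation_le hadm hn hk hval' hNHP' (L0 G k + 1) h hnode (by omega)

end Aux9
/-- **Efficiency, first part.** Every Pareto optimal profile `a`
is the no-harm equilibrium outcome of `Γ(a0,k,I)` for some initial reference
point `a0`, for every `k ≥ 1` and every admissible player function `I`. -/
theorem pareto_opt_is_nhe_outcome {n : ℕ} (hn : 2 ≤ n) (G : Game n)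
    (hG : StrictPrefs G) (a : Profile G) (ha : ParetoOpt G a) :
    ∃ a0 : Profile G, ∀ k : ℕ, 0 < k → ∀ I : Hist G → Fin n,
      Admissible G a0 k I →
        (∃ σ : StratProfile G, NHE G a0 k I σ) ∧
        (∀ σ : StratProfile G, NHE G a0 k I σ → outcome G a0 k I σ = a) := by
  refine ⟨a, fun k hk I hadm => ?_⟩
  have hn0 : 0 < n := by omega
  exact ⟨⟨sigmaHat G a k I, sigmaHat_NHE hadm hn0 hk⟩,
    fun σ hσ => nhe_outcome_eq hn hG a ha hk hadm σ hσ⟩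

end NoHarm
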